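/- arXiv:0706.0362 — 2 statements merged into one kernel-verified Lean document; each statement's English description precedes it below -/
import Mathlib

section
/- Adopt the standing setup: Λ a connected row-finite k-graph with no sources, c : Λ → G a cocycle, H_n a descending chain of finite-index normal subgroups with H_1 = G, G_n = G/H_n, c_n(λ) = c(λ)H_n, Λ_n = Λ ×_{c_n} G_n and coverings p_n(λ, g) = (λ, q_n(g)), and let T = tgrphlim(Λ_n; p_n) be the tower (k+1)-graph. Fix x ∈ Λ^∞ and g = (g_n)_{n≥1} ∈ varprojlim(G_n, q_n), and for each n let (x, g_n) ∈ Λ_n^∞ be the unique infinite path with (x, g_n)(0,m) = (x(0,m), c_n(x(0,m))^{-1} g_n) for all m ∈ ℕ^k. Then there is a unique infinite path x^g ∈ T^∞ such that x^g(0, (m,0)) = ι_1(x(0,m)) for all m ∈ ℕ^k and x^g((n−1)e_{k+1}) is the vertex (x(0), g_n) ∈ Λ_n^0 for all n ≥ 1. Moreover σ^{(n−1)e_{k+1}}(x^g)(0, (m,0)) = ι_n((x, g_n)(0,m)) for all m ∈ ℕ^k and n ≥ 1. -/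
open CategoryTheory

attribute [local instance 2000] Preorder.smallCategory

/-- A `k`-graph: a small category `Λ` equipped with a degree functor `d : Λ → ℕᵏ`
satisfying the unique factorisation property.  Morphisms point from the range of a path
to its source, so that `f ≫ g` corresponds to the composition `fg` of paths in the
`k`-graph literature (with `r (f ≫ g) = r f` and `s (f ≫ g) = s g`). -/
structure KGraph (k : ℕ) (Λ : Type) [SmallCategory Λ] : Type where
  deg : ∀ {a b : Λ}, (a ⟶ b) → Fin k → ℕ
  deg_id : ∀ a : Λ, deg (𝟙 a) = 0
  deg_comp : ∀ {a b c : Λ} (f : a ⟶ b) (g : b ⟶ c), deg (f ≫ g) = deg f + deg g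
  factor : ∀ {a b : Λ} (f : a ⟶ b) (m n : Fin k → ℕ), deg f = m + n →
    ∃! t : Σ c : Λ, (a ⟶ c) × (c ⟶ b),
      deg t.2.1 = m ∧ deg t.2.2 = n ∧ t.2.1 ≫ t.2.2 = f

/-- An infinite path in a `k`-graph: a degree-preserving functor `Ω_k → Λ`, where `Ω_k`
is realised as the preorder category on `ℕᵏ = Fin k → ℕ`; the morphism `(p, q)` (for
`p ≤ q`) is `homOfLE h : p ⟶ q` and must be sent to a path of degree `q - p`.
The range of the path is `P.obj 0`. -/
structure InfPath {k : ℕ} {Λ : Type} [SmallCategory Λ] (KG : KGraph k Λ) : Type where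
  P : (Fin k → ℕ) ⥤ Λ
  deg_eq : ∀ {p q : Fin k → ℕ} (h : p ≤ q), KG.deg (P.map (homOfLE h)) = q - p

/-- Translation by `n` on `ℕᵏ`, as a functor. -/
def transFunctor (k : ℕ) (n : Fin k → ℕ) : (Fin k → ℕ) ⥤ (Fin k → ℕ) where
  obj p := p + n
  map f := homOfLE (add_le_add (leOfHom f) (le_refl n))
  map_id _ := rfl
  map_comp _ _ := rfl

/-- The shift `σⁿ x` of an infinite path `x`, satisfying `σⁿ x (p, q) = x (p + n, q + n)`. -/
def InfPath.shift {k : ℕ} {Λ : Type} [SmallCategory Λ] {KG : KGraph k Λ}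
    (x : InfPath KG) (n : Fin k → ℕ) : InfPath KG where
  P := transFunctor k n ⋙ x.P
  deg_eq {p q} h := by
    have h1 : (transFunctor k n ⋙ x.P).map (homOfLE h)
        = x.P.map (homOfLE (add_le_add h (le_refl n))) := rfl
    show KG.deg (x.P.map (homOfLE (add_le_add h (le_refl n)))) = q - p
    rw [x.deg_eq]
    funext i
    simp only [Pi.sub_apply, Pi.add_apply]
    omega

/-- A cocycle on a `k`-graph: a functor `c : Λ → G` into a group `G` (viewed as a category
with one object).  With our orientation of arrows, `c (f ≫ g) = c f * c g`. -/
structure Cocycle (Λ : Type) [SmallCategory Λ] (G : Type) [Group G] : Type where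
  c : ∀ {a b : Λ}, (a ⟶ b) → G
  map_id : ∀ a : Λ, c (𝟙 a) = 1
  map_comp : ∀ {a b d : Λ} (f : a ⟶ b) (g : b ⟶ d), c (f ≫ g) = c f * c g

/-- The skew product `Λ ×_c G`: vertices are pairs `(v, g)`, and `(λ, g)` is a path with
source `(s λ, g)` and range `(r λ, c(λ) g)`.  Here a morphism from `(a, h)` to `(b, g)` is
a path `f : a ⟶ b` with `c f * g = h`. -/
structure Skew {Λ : Type} [SmallCategory Λ] {G : Type} [Group G] (σ : Cocycle Λ G) : Type where
  base : Λ
  grp : G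

instance Skew.instCategory {Λ : Type} [SmallCategory Λ] {G : Type} [Group G]
    (σ : Cocycle Λ G) : SmallCategory (Skew σ) where
  Hom a b := {f : a.base ⟶ b.base // σ.c f * b.grp = a.grp}
  id a := ⟨𝟙 a.base, by rw [σ.map_id, one_mul]⟩
  comp f g := ⟨f.1 ≫ g.1, by rw [σ.map_comp, mul_assoc, g.2, f.2]⟩
  id_comp f := by apply Subtype.ext; exact Category.id_comp f.1
  comp_id f := by apply Subtype.ext; exact Category.comp_id f.1
  assoc f g h := by apply Subtype.ext; exact Category.assoc f.1 g.1 h.1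

/-- The `k`-graph structure on the skew product `Λ ×_c G`. -/
def skewKGraph {k : ℕ} {Λ : Type} [SmallCategory Λ] (KG : KGraph k Λ) {G : Type} [Group G]
    (σ : Cocycle Λ G) : KGraph k (Skew σ) where
  deg f := KG.deg f.1
  deg_id a := KG.deg_id a.base
  deg_comp f g := KG.deg_comp f.1 g.1
  factor := by
    rintro a b f m n hmn
    obtain ⟨⟨c0, g0, h0⟩, ⟨hgm, hhn, hgh⟩, huniq⟩ := KG.factor f.1 m n hmn
    refine ⟨⟨⟨c0, (σ.c g0)⁻¹ * a.grp⟩, ⟨g0, mul_inv_cancel_left _ _⟩, ⟨h0, ?_⟩⟩,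
      ⟨hgm, hhn, Subtype.ext hgh⟩, ?_⟩
    · rw [← f.2, ← hgh, σ.map_comp, mul_assoc, inv_mul_cancel_left]
    · rintro ⟨⟨c1, x1⟩, ⟨g1, hg1⟩, ⟨h1, hh1⟩⟩ ⟨hm1, hn1, hcomp1⟩
      have hbase : (⟨c0, g0, h0⟩ : Σ c : Λ, (a.base ⟶ c) × (c ⟶ b.base)) = ⟨c1, g1, h1⟩ :=
        (huniq ⟨c1, g1, h1⟩ ⟨hm1, hn1, congrArg Subtype.val hcomp1⟩).symm
      obtain ⟨h1', h2'⟩ := Sigma.mk.inj_iff.mp hbase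
      subst h1'
      obtain ⟨h3', h4'⟩ := Prod.mk.inj (eq_of_heq h2')
      subst h3'
      subst h4'
      have hx : x1 = (σ.c g0)⁻¹ * a.grp := by rw [← hg1, inv_mul_cancel_left]
      subst hx
      rfl

/-- For `m ≤ n` and a descending chain `H` of normal subgroups, the canonical map
`G/Hₙ → G/Hₘ` (the map `q_{m,n}` induced by the projections `qᵢ`). -/
def quotDown {G : Type} [Group G] {H : ℕ → Subgroup G} [∀ i, (H i).Normal]
    (hH : Antitone H) {m n : ℕ} (h : m ≤ n) : G ⧸ H n →* G ⧸ H m :=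
  QuotientGroup.map _ _ (MonoidHom.id G) (fun _ hx => hH h hx)

lemma quotDown_mk {G : Type} [Group G] {H : ℕ → Subgroup G} [∀ i, (H i).Normal]
    (hH : Antitone H) {m n : ℕ} (h : m ≤ n) (g : G) :
    quotDown hH h (g : G ⧸ H n) = (g : G ⧸ H m) := rfl

lemma quotDown_refl {G : Type} [Group G] {H : ℕ → Subgroup G} [∀ i, (H i).Normal]
    (hH : Antitone H) (n : ℕ) (z : G ⧸ H n) : quotDown hH (le_refl n) z = z := by
  induction z using QuotientGroup.induction_on with
  | _ g => rfl

lemma quotDown_comp {G : Type} [Group G] {H : ℕ → Subgroup G} [∀ i, (H i).Normal]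
    (hH : Antitone H) {l m n : ℕ} (h1 : l ≤ m) (h2 : m ≤ n) (z : G ⧸ H n) :
    quotDown hH h1 (quotDown hH h2 z) = quotDown hH (h1.trans h2) z := by
  induction z using QuotientGroup.induction_on with
  | _ g => rfl

/-- Total version of `quotDown` (junk value `1` when `m > n`). -/
def qd {G : Type} [Group G] {H : ℕ → Subgroup G} [∀ i, (H i).Normal]
    (hH : Antitone H) (m n : ℕ) (z : G ⧸ H n) : G ⧸ H m :=
  if h : m ≤ n then quotDown hH h z else 1

/-- The tower `(k+1)`-graph `T = tgrphlim (Λₙ; pₙ)` of [KPS] for the system of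
skew-product coverings `pₙ : Λ ×_{c_{n+1}} G/H_{n+1} → Λ ×_{c_n} G/Hₙ`.  Its vertices are
the disjoint union of the vertices `(v, gHₙ)` of the skew products `Λₙ = Λ ×_{c_n} G/Hₙ`;
a morphism of degree `(m, j)` from a level-`n` vertex is a path `λ ∈ Λₙ^m` together with a
vertex `w` of `Λ_{n+j}` lying over its source.  (Here such a morphism from `(n, v, g)` to
`(n', v', g')` is encoded as a path `f : v ⟶ v'` of `Λ` such that `n ≤ n'` and
`c_n(f)·q_{n,n'}(g') = g` in `G/Hₙ`.) -/
structure TObj {Λ : Type} [SmallCategory Λ] {G : Type} [Group G] {H : ℕ → Subgroup G}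
    [∀ i, (H i).Normal] (c : Cocycle Λ G) (hH : Antitone H) : Type where
  lvl : ℕ
  vert : Λ
  grp : G ⧸ H lvl

instance TObj.instCategory {Λ : Type} [SmallCategory Λ] {G : Type} [Group G]
    {H : ℕ → Subgroup G} [∀ i, (H i).Normal] (c : Cocycle Λ G) (hH : Antitone H) :
    SmallCategory (TObj c hH) where
  Hom a b := {f : a.vert ⟶ b.vert //
    a.lvl ≤ b.lvl ∧ (↑(c.c f) : G ⧸ H a.lvl) * qd hH a.lvl b.lvl b.grp = a.grp}
  id a := ⟨𝟙 a.vert, le_rfl, by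
    rw [c.map_id, qd, dif_pos le_rfl, quotDown_refl]
    exact one_mul a.grp⟩
  comp {a b c'} f g := ⟨f.1 ≫ g.1, f.2.1.trans g.2.1, by
    obtain ⟨hab, hf⟩ := f.2
    obtain ⟨hbc, hg⟩ := g.2
    simp only [qd, dif_pos hbc] at hg
    simp only [qd, dif_pos hab] at hf
    simp only [qd, dif_pos (hab.trans hbc)]
    have h1 := congrArg (quotDown hH hab) hg
    rw [map_mul, quotDown_mk, quotDown_comp] at h1
    rw [c.map_comp]
    calc (↑(c.c f.1 * c.c g.1) : G ⧸ H a.lvl) * quotDown hH (hab.trans hbc) c'.grp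
        = ↑(c.c f.1) * (↑(c.c g.1) * quotDown hH (hab.trans hbc) c'.grp) := by
          rw [QuotientGroup.mk_mul, mul_assoc]
      _ = ↑(c.c f.1) * quotDown hH hab b.grp := by rw [h1]
      _ = a.grp := hf⟩
  id_comp f := by apply Subtype.ext; exact Category.id_comp f.1
  comp_id f := by apply Subtype.ext; exact Category.comp_id f.1
  assoc f g h := by apply Subtype.ext; exact Category.assoc f.1 g.1 h.1

/-- The `(k+1)`-graph structure on the tower graph: the degree of a morphism is
`(d(λ), j)` where `j` is the level difference. -/
def towerKG {k : ℕ} {Λ : Type} [SmallCategory Λ] (KG : KGraph k Λ) {G : Type} [Group G]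
    {H : ℕ → Subgroup G} [∀ i, (H i).Normal] (c : Cocycle Λ G) (hH : Antitone H) :
    KGraph (k + 1) (TObj c hH) where
  deg {a b} f := Fin.snoc (KG.deg f.1) (b.lvl - a.lvl)
  deg_id a := by
    funext i
    refine Fin.lastCases ?_ (fun i => ?_) i
    · simp [Fin.snoc]
    · have h0 : (𝟙 a : a ⟶ a).1 = 𝟙 a.vert := rfl
      have : KG.deg (𝟙 a.vert) = 0 := KG.deg_id a.vert
      simp [Fin.snoc, h0, this]
  deg_comp {a b c'} f g := by
    funext i
    refine Fin.lastCases ?_ (fun i => ?_) i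
    · have h1 := f.2.1
      have h2 := g.2.1
      simp only [Fin.snoc_last, Pi.add_apply]
      omega
    · have h0 : (f ≫ g : a ⟶ c').1 = f.1 ≫ g.1 := rfl
      have : KG.deg (f.1 ≫ g.1) = KG.deg f.1 + KG.deg g.1 := KG.deg_comp f.1 g.1
      simp [Fin.snoc, h0, this]
  factor := by
    rintro a b f m n hmn
    have hble := f.2.1
    have hcond := f.2.2
    have hhead : KG.deg f.1 = (fun i => m (Fin.castSucc i)) + (fun i => n (Fin.castSucc i)) := by
      funext i
      have h := congrFun hmn (Fin.castSucc i)
      simpa [Fin.snoc] using h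
    have hlast : b.lvl - a.lvl = m (Fin.last k) + n (Fin.last k) := by
      have h := congrFun hmn (Fin.last k)
      simpa [Fin.snoc] using h
    obtain ⟨⟨c0, g0, h0⟩, ⟨hg, hh, hgh⟩, uniq⟩ :=
      KG.factor f.1 (fun i => m (Fin.castSucc i)) (fun i => n (Fin.castSucc i)) hhead
    have hmidle : a.lvl + m (Fin.last k) ≤ b.lvl := by omega
    refine ⟨⟨⟨a.lvl + m (Fin.last k), c0,
        ↑(c.c h0) * qd hH (a.lvl + m (Fin.last k)) b.lvl b.grp⟩,
        ⟨g0, Nat.le_add_right _ _, ?_⟩, ⟨h0, hmidle, rfl⟩⟩,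
      ⟨?_, ?_, Subtype.ext hgh⟩, ?_⟩
    · simp only [qd, dif_pos (Nat.le_add_right a.lvl (m (Fin.last k))), dif_pos hmidle,
        dif_pos hble]
      rw [map_mul, quotDown_mk, quotDown_comp]
      rw [← mul_assoc, ← QuotientGroup.mk_mul, ← c.map_comp, hgh]
      simp only [qd, dif_pos hble] at hcond
      exact hcond
    · funext i
      refine Fin.lastCases ?_ (fun i => ?_) i
      · simp only [Fin.snoc_last]
        omega
      · have h := congrFun hg i
        simpa [Fin.snoc] using h
    · funext i
      refine Fin.lastCases ?_ (fun i => ?_) i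
      · simp only [Fin.snoc_last]
        omega
      · have h := congrFun hh i
        simpa [Fin.snoc] using h
    · rintro ⟨⟨L, V, Z⟩, ⟨g1, hle1, hc1⟩, ⟨h1, hle2, hc2⟩⟩ ⟨dm, dn, dcomp⟩
      dsimp only at hle1 hle2 hc1 hc2 dm dn
      have hcompval : g1 ≫ h1 = f.1 := congrArg Subtype.val dcomp
      have hdg1 : KG.deg g1 = fun i => m (Fin.castSucc i) := by
        funext i
        have h := congrFun dm (Fin.castSucc i)
        simpa [Fin.snoc] using h
      have hdh1 : KG.deg h1 = fun i => n (Fin.castSucc i) := by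
        funext i
        have h := congrFun dn (Fin.castSucc i)
        simpa [Fin.snoc] using h
      have hLm : L - a.lvl = m (Fin.last k) := by
        have h := congrFun dm (Fin.last k)
        simpa [Fin.snoc] using h
      have hL : L = a.lvl + m (Fin.last k) := by omega
      subst hL
      have hbase : (⟨c0, g0, h0⟩ : Σ c' : Λ, (a.vert ⟶ c') × (c' ⟶ b.vert)) = ⟨V, g1, h1⟩ :=
        (uniq ⟨V, g1, h1⟩ ⟨hdg1, hdh1, hcompval⟩).symm
      obtain ⟨h1', h2'⟩ := Sigma.mk.inj_iff.mp hbase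
      subst h1'
      obtain ⟨h3', h4'⟩ := Prod.mk.inj (eq_of_heq h2')
      subst h3'
      subst h4'
      have hZ : Z = ↑(c.c h0) * qd hH (a.lvl + m (Fin.last k)) b.lvl b.grp := hc2.symm
      subst hZ
      rfl

/-- The induced cocycle `c_N : Λ → G/N`, `c_N(λ) = c(λ)N`. -/
def cq {Λ : Type} [SmallCategory Λ] {G : Type} [Group G] (c : Cocycle Λ G)
    (N : Subgroup G) [N.Normal] : Cocycle Λ (G ⧸ N) where
  c f := ↑(c.c f)
  map_id a := by
    show ((c.c (𝟙 a) : G) : G ⧸ N) = 1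
    rw [c.map_id]; rfl
  map_comp f g := by
    show ((c.c (f ≫ g) : G) : G ⧸ N) = ↑(c.c f) * ↑(c.c g)
    rw [c.map_comp]; rfl

/-- `IsXG KG c hH x g y` says that `y = x^g`: `y` is the infinite path of the tower
`(k+1)`-graph determined by `x ∈ Λ^∞` and `g = (gₙ) ∈ varprojlim (G/Hₙ, qₙ)`, i.e.
`y(0, (m, 0)) = ι₁(x(0, m))` for all `m ∈ ℕᵏ` (where `ι₁` embeds `Λ ≅ Λ₁` into the tower)
and `y(n·e_{k+1})` is the vertex `(x(0), gₙ)` of `Λₙ` for all `n`. -/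
def IsXG {k : ℕ} {Λ : Type} [SmallCategory Λ] (KG : KGraph k Λ) {G : Type} [Group G]
    {H : ℕ → Subgroup G} [∀ i, (H i).Normal] (c : Cocycle Λ G) (hH : Antitone H)
    (x : InfPath KG) (g : ∀ i, G ⧸ H i) (y : InfPath (towerKG KG c hH)) : Prop :=
  (∀ m : Fin k → ℕ,
    (y.P.obj (Fin.snoc m 0)).lvl = 0 ∧
    (y.P.obj (Fin.snoc m 0)).vert = x.P.obj m ∧
    HEq (y.P.map (homOfLE (zero_le : 0 ≤ (Fin.snoc m 0 : Fin (k + 1) → ℕ)))).1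
        (x.P.map (homOfLE (zero_le : 0 ≤ m)))) ∧
  (∀ n : ℕ, y.P.obj (Fin.snoc (0 : Fin k → ℕ) n) = ⟨n, x.P.obj 0, g n⟩)

/-!
Every path of a k-graph is an epimorphism (unique factorisation), so an infinite path is
determined by its vertices and its initial segments. If `y` has the defining properties of
`x^g`, these are forced: the segment `y((m, 0), (m, n))` has `Λ`-degree `0`, hence is an
identity in `Λ`, so `y(m, n)` lies over `x(m)` at level `n` and `y(0, (m, n))` lies over
`x(0, m)`; lifting `x(0, m)` to the vertex `y(0, n) = (x(0), gₙ)` then fixes the group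
coordinate of `y(m, n)` as `cₙ(x(0, m))⁻¹ gₙ`. Conversely, compatibility of the `gₙ` makes
these data an infinite path of the tower.
-/

theorem Fin.init_le_init {α : Type*} [Preorder α] {k : ℕ} {p q : Fin (k + 1) → α}
    (h : p ≤ q) : Fin.init p ≤ Fin.init q :=
  fun i => h i.castSucc

theorem Fin.snoc_le_of_le_init {α : Type*} [Preorder α] {k : ℕ} {p : Fin k → α} {t : α}
    {q : Fin (k + 1) → α} (hp : p ≤ Fin.init q) (ht : t ≤ q (Fin.last k)) :
    (Fin.snoc p t : Fin (k + 1) → α) ≤ q :=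
  fun i => Fin.lastCases (by simpa using ht) (fun j => by simpa [Fin.init] using hp j) i

theorem CategoryTheory.Functor.hext_of_epi_map_from {J : Type*} [Preorder J] {C : Type*}
    [Category C] {F F' : J ⥤ C} (j₀ : J) (hj₀ : ∀ j, j₀ ≤ j)
    (hepi : ∀ j, Epi (F.map (homOfLE (hj₀ j))))
    (hobj : ∀ j, F.obj j = F'.obj j)
    (hmap : ∀ j, HEq (F.map (homOfLE (hj₀ j))) (F'.map (homOfLE (hj₀ j)))) : F = F' := by
  have hF (j : J) : F.map (homOfLE (hj₀ j))
      = eqToHom (hobj j₀) ≫ F'.map (homOfLE (hj₀ j)) ≫ eqToHom (hobj j).symm :=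
    (conj_eqToHom_iff_heq _ _ (hobj j₀) (hobj j)).mpr (hmap j)
  have hcomp (E : J ⥤ C) {i j : J} (f : i ⟶ j) :
      E.map (homOfLE (hj₀ i)) ≫ E.map f = E.map (homOfLE (hj₀ j)) := by
    rw [← E.map_comp]; rfl
  refine Functor.hext hobj fun i j f => ?_
  rw [← conj_eqToHom_iff_heq _ _ (hobj i) (hobj j), ← cancel_epi (F.map (homOfLE (hj₀ i))),
    hcomp, hF, hF]
  simp only [Category.assoc, eqToHom_trans_assoc, eqToHom_refl, Category.id_comp,
    reassoc_of% hcomp F']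

namespace KGraph

variable {k : ℕ} {Λ : Type} [SmallCategory Λ] (KG : KGraph k Λ)

theorem factor_eq {a b c c' : Λ} (g : a ⟶ c) (h : c ⟶ b) (g' : a ⟶ c') (h' : c' ⟶ b)
    (hg : KG.deg g' = KG.deg g) (hh : KG.deg h' = KG.deg h) (he : g' ≫ h' = g ≫ h) :
    (⟨c, g, h⟩ : Σ d, (a ⟶ d) × (d ⟶ b)) = ⟨c', g', h'⟩ :=
  (KG.factor (g ≫ h) _ _ (KG.deg_comp g h)).unique ⟨rfl, rfl, rfl⟩ ⟨hg, hh, he⟩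

theorem epi (KG : KGraph k Λ) {a b : Λ} (f : a ⟶ b) : Epi f where
  left_cancellation h h' he := by
    have hdeg : KG.deg h' = KG.deg h :=
      add_left_cancel (by rw [← KG.deg_comp, ← KG.deg_comp, he])
    simpa using KG.factor_eq f h f h' rfl hdeg he.symm

theorem exists_eq_eqToHom_of_deg_eq_zero {a b : Λ} (f : a ⟶ b) (hf : KG.deg f = 0) :
    ∃ h : a = b, f = eqToHom h := by
  obtain ⟨rfl, hf'⟩ := Sigma.mk.inj_iff.mp <|
    KG.factor_eq f (𝟙 b) (𝟙 a) f (by rw [hf, KG.deg_id]) (by rw [hf, KG.deg_id]) (by simp)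
  exact ⟨rfl, (Prod.mk.inj (eq_of_heq hf')).1⟩

end KGraph

section InfPath

variable {k : ℕ} {Λ : Type} [SmallCategory Λ] {KG : KGraph k Λ}

theorem InfPath.ext_of_map_zero {w w' : InfPath KG} (hobj : ∀ m, w.P.obj m = w'.P.obj m)
    (hmap : ∀ m : Fin k → ℕ, HEq (w.P.map (homOfLE (zero_le : 0 ≤ m)))
      (w'.P.map (homOfLE (zero_le : 0 ≤ m)))) :
    w = w' := by
  obtain ⟨P, _⟩ := w
  obtain ⟨P', _⟩ := w'
  obtain rfl : P = P' :=
    Functor.hext_of_epi_map_from 0 (fun _ => zero_le) (fun _ => KG.epi _) hobj hmap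
  rfl

theorem InfPath.map_heq_of_eq (x : InfPath KG) {p q p' q' : Fin k → ℕ} (hp : p = p')
    (hq : q = q') (h : p ≤ q) (h' : p' ≤ q') :
    HEq (x.P.map (homOfLE h)) (x.P.map (homOfLE h')) := by
  subst hp hq
  rfl

theorem InfPath.map_zero_comp (x : InfPath KG) {p q : Fin k → ℕ} (h : p ≤ q) :
    x.P.map (homOfLE (zero_le : 0 ≤ p)) ≫ x.P.map (homOfLE h)
      = x.P.map (homOfLE (zero_le : 0 ≤ q)) := by
  rw [← x.P.map_comp]; rfl

end InfPath

theorem Skew.hom_heq {Λ : Type} [SmallCategory Λ] {G : Type} [Group G] {σ : Cocycle Λ G}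
    {a b a' b' : Skew σ} (ha : a = a') (hb : b = b') {f : a ⟶ b} {f' : a' ⟶ b'}
    (h : HEq f.1 f'.1) : HEq f f' := by
  subst ha hb
  exact heq_of_eq (Subtype.ext (eq_of_heq h))

theorem TObj.hom_heq {Λ : Type} [SmallCategory Λ] {G : Type} [Group G]
    {H : ℕ → Subgroup G} [∀ i, (H i).Normal] {c : Cocycle Λ G} {hH : Antitone H}
    {a b a' b' : TObj c hH} (ha : a = a') (hb : b = b') {f : a ⟶ b} {f' : a' ⟶ b'}
    (h : HEq f.1 f'.1) : HEq f f' := by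
  subst ha hb
  exact heq_of_eq (Subtype.ext (eq_of_heq h))

section Skew

variable {k : ℕ} {Λ : Type} [SmallCategory Λ] {KG : KGraph k Λ} {G : Type} [Group G]

/-- The path `(x, γ)` of `Λ ×_c G/N`. -/
def InfPath.skew (x : InfPath KG) (c : Cocycle Λ G) (N : Subgroup G) [N.Normal] (γ : G ⧸ N) :
    InfPath (skewKGraph KG (cq c N)) where
  P.obj m := ⟨x.P.obj m, (c.c (x.P.map (homOfLE (zero_le : 0 ≤ m))) : G ⧸ N)⁻¹ * γ⟩
  P.map {p q} f := ⟨x.P.map f, by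
    change ((c.c (x.P.map (homOfLE (leOfHom f))) : G) : G ⧸ N) * _ = _
    rw [← x.map_zero_comp (leOfHom f), c.map_comp, QuotientGroup.mk_mul]
    group⟩
  P.map_id p := Subtype.ext (x.P.map_id p)
  P.map_comp f g := Subtype.ext (x.P.map_comp f g)
  deg_eq := x.deg_eq

theorem InfPath.eq_skew (x : InfPath KG) (c : Cocycle Λ G) (N : Subgroup G) [N.Normal]
    (γ : G ⧸ N) {w : InfPath (skewKGraph KG (cq c N))}
    (hobj : ∀ m, w.P.obj m = (x.skew c N γ).P.obj m)
    (hmap : ∀ m : Fin k → ℕ, HEq (w.P.map (homOfLE (zero_le : 0 ≤ m))).1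
      (x.P.map (homOfLE (zero_le : 0 ≤ m)))) :
    w = x.skew c N γ :=
  InfPath.ext_of_map_zero hobj fun m => Skew.hom_heq (hobj 0) (hobj m) (hmap m)

end Skew

section Tower

variable {k : ℕ} {Λ : Type} [SmallCategory Λ] {KG : KGraph k Λ} {G : Type} [Group G]
  {H : ℕ → Subgroup G} [∀ i, (H i).Normal] {hH : Antitone H}

theorem qd_of_le {m n : ℕ} (h : m ≤ n) (z : G ⧸ H n) : qd hH m n z = quotDown hH h z :=
  dif_pos h

theorem quotDown_of_compatible {g : ∀ i, G ⧸ H i}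
    (hg : ∀ i, quotDown hH (Nat.le_succ i) (g (i + 1)) = g i) {m n : ℕ} (h : m ≤ n) :
    quotDown hH h (g n) = g m := by
  induction n, h using Nat.le_induction with
  | base => exact quotDown_refl hH m (g m)
  | succ n hmn ih => rw [← quotDown_comp hH hmn (Nat.le_succ n), hg n, ih]

/-- The path `x^g` of the tower graph. -/
def InfPath.tower (x : InfPath KG) (c : Cocycle Λ G) (g : ∀ i, G ⧸ H i)
    (hg : ∀ i, quotDown hH (Nat.le_succ i) (g (i + 1)) = g i) :
    InfPath (towerKG KG c hH) where
  P.obj q := ⟨q (Fin.last k), x.P.obj (Fin.init q),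
    (c.c (x.P.map (homOfLE (zero_le : 0 ≤ Fin.init q))) : G ⧸ H (q (Fin.last k)))⁻¹
      * g (q (Fin.last k))⟩
  P.map {p q} f := ⟨x.P.map (homOfLE (Fin.init_le_init (leOfHom f))), leOfHom f (Fin.last k), by
    dsimp only
    rw [qd_of_le (leOfHom f _), map_mul, map_inv, quotDown_mk, quotDown_of_compatible hg,
      ← x.map_zero_comp (Fin.init_le_init (leOfHom f)), c.map_comp, QuotientGroup.mk_mul]
    group⟩
  P.map_id _ := Subtype.ext (x.P.map_id _)
  P.map_comp _ _ := Subtype.ext (x.P.map_comp _ _)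
  deg_eq {p q} h := by
    funext i
    refine Fin.lastCases ?_ (fun i => ?_) i
    · simp [towerKG]
    · change Fin.snoc (α := fun _ => ℕ) (KG.deg (x.P.map (homOfLE (Fin.init_le_init h)))) _
        i.castSucc = _
      rw [Fin.snoc_castSucc, x.deg_eq]
      rfl

theorem InfPath.tower_obj_eq (x : InfPath KG) (c : Cocycle Λ G) {g : ∀ i, G ⧸ H i}
    (hg : ∀ i, quotDown hH (Nat.le_succ i) (g (i + 1)) = g i) (q : Fin (k + 1) → ℕ) {n : ℕ}
    {m : Fin k → ℕ} (hn : q (Fin.last k) = n) (hm : Fin.init q = m) :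
    (x.tower c g hg).P.obj q
      = ⟨n, x.P.obj m, (c.c (x.P.map (homOfLE (zero_le : 0 ≤ m))) : G ⧸ H n)⁻¹ * g n⟩ := by
  subst hn hm
  rfl

theorem InfPath.towerKG_deg_map_val {c : Cocycle Λ G} (y : InfPath (towerKG KG c hH))
    {p q : Fin (k + 1) → ℕ} (h : p ≤ q) :
    KG.deg (y.P.map (homOfLE h)).1 = Fin.init q - Fin.init p := by
  funext i
  simpa [towerKG, Fin.init] using congrFun (y.deg_eq h) i.castSucc

theorem InfPath.towerKG_lvl_sub {c : Cocycle Λ G} (y : InfPath (towerKG KG c hH))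
    {p q : Fin (k + 1) → ℕ} (h : p ≤ q) :
    (y.P.obj q).lvl - (y.P.obj p).lvl = q (Fin.last k) - p (Fin.last k) := by
  simpa [towerKG] using congrFun (y.deg_eq h) (Fin.last k)

theorem InfPath.towerKG_map_val_eq_eqToHom {c : Cocycle Λ G} (y : InfPath (towerKG KG c hH))
    {p q : Fin (k + 1) → ℕ} (h : p ≤ q) (hpq : Fin.init p = Fin.init q) :
    ∃ e : (y.P.obj p).vert = (y.P.obj q).vert, (y.P.map (homOfLE h)).1 = eqToHom e :=
  KG.exists_eq_eqToHom_of_deg_eq_zero _ (by rw [y.towerKG_deg_map_val, hpq, tsub_self])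

theorem InfPath.towerKG_map_val_comp {c : Cocycle Λ G} (y : InfPath (towerKG KG c hH))
    {p q r : Fin (k + 1) → ℕ} (h₁ : p ≤ q) (h₂ : q ≤ r) :
    (y.P.map (homOfLE h₁)).1 ≫ (y.P.map (homOfLE h₂)).1 = (y.P.map (homOfLE (h₁.trans h₂))).1 :=
  congrArg Subtype.val (y.P.map_comp (homOfLE h₁) (homOfLE h₂)).symm

theorem TObj.eq_mk_of_hom {c : Cocycle Λ G} {a b : TObj c hH} (f : a ⟶ b) {n : ℕ}
    {v v' : Λ} {z : G ⧸ H n} (ha : a = ⟨n, v, z⟩) (hbl : b.lvl = n) (hbv : b.vert = v')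
    {f₀ : v ⟶ v'} (hf : HEq f.1 f₀) :
    b = ⟨n, v', (c.c f₀ : G ⧸ H n)⁻¹ * z⟩ := by
  subst ha
  obtain ⟨n', v'', z'⟩ := b
  dsimp only at hbl hbv
  subst hbl hbv
  have hz : (c.c f.1 : G ⧸ H n') * qd hH n' n' z' = z := f.2.2
  rw [eq_of_heq hf, qd_of_le le_rfl, quotDown_refl] at hz
  rw [← hz, inv_mul_cancel_left]

end Tower

section IsXG

variable {k : ℕ} {Λ : Type} [SmallCategory Λ] {KG : KGraph k Λ} {G : Type} [Group G]
  {H : ℕ → Subgroup G} [∀ i, (H i).Normal] {hH : Antitone H} {c : Cocycle Λ G}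
  {x : InfPath KG} {g : ∀ i, G ⧸ H i}

theorem isXG_tower (hg : ∀ i, quotDown hH (Nat.le_succ i) (g (i + 1)) = g i) :
    IsXG KG c hH x g (x.tower c g hg) := by
  refine ⟨fun m => ?_, fun n => ?_⟩
  · exact ⟨Fin.snoc_last (α := fun _ => ℕ) 0 m, congrArg x.P.obj (Fin.init_snoc _ _),
      x.map_heq_of_eq rfl (Fin.init_snoc _ _) _ _⟩
  · rw [x.tower_obj_eq c hg _ (Fin.snoc_last _ _) (Fin.init_snoc _ _),
      show x.P.map (homOfLE (zero_le : (0 : Fin k → ℕ) ≤ 0)) = 𝟙 _ from x.P.map_id 0,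
      c.map_id, QuotientGroup.mk_one, inv_one, one_mul]

theorem IsXG.obj_eq_tower_and_map_heq (hg : ∀ i, quotDown hH (Nat.le_succ i) (g (i + 1)) = g i)
    {y : InfPath (towerKG KG c hH)} (hy : IsXG KG c hH x g y) (q : Fin (k + 1) → ℕ) :
    y.P.obj q = (x.tower c g hg).P.obj q ∧
      HEq (y.P.map (homOfLE (zero_le : 0 ≤ q))).1
        (x.P.map (homOfLE (zero_le : 0 ≤ Fin.init q))) := by
  obtain ⟨hlvl₀, hvert₀, hmap₀⟩ := hy.1 (Fin.init q)
  set a : Fin (k + 1) → ℕ := Fin.snoc (Fin.init q) 0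
  set b : Fin (k + 1) → ℕ := Fin.snoc 0 (q (Fin.last k))
  have ha : a ≤ q := Fin.snoc_le_of_le_init le_rfl zero_le
  have hb : b ≤ q := Fin.snoc_le_of_le_init zero_le le_rfl
  obtain ⟨ea, hea⟩ := y.towerKG_map_val_eq_eqToHom ha (Fin.init_snoc _ _)
  obtain ⟨eb, heb⟩ := y.towerKG_map_val_eq_eqToHom (zero_le : 0 ≤ b)
    (by simp only [b, Fin.init_snoc]; rfl)
  have hmap : HEq (y.P.map (homOfLE (zero_le : 0 ≤ q))).1
      (x.P.map (homOfLE (zero_le : 0 ≤ Fin.init q))) := by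
    rw [← y.towerKG_map_val_comp (zero_le : 0 ≤ a) ha, hea]
    exact (comp_eqToHom_heq _ _).trans hmap₀
  have hmap_b : HEq (y.P.map (homOfLE hb)).1
      (x.P.map (homOfLE (zero_le : 0 ≤ Fin.init q))) := by
    rw [← eqToHom_comp_heq_iff _ _ eb, ← heb, y.towerKG_map_val_comp]
    exact hmap
  have hlvl : (y.P.obj q).lvl = q (Fin.last k) := by
    have := y.towerKG_lvl_sub ha
    simp only [a, Fin.snoc_last, hlvl₀] at this
    omega
  refine ⟨?_, hmap⟩
  rw [TObj.eq_mk_of_hom (y.P.map (homOfLE hb)) (hy.2 _) hlvl (ea.symm.trans hvert₀) hmap_b]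
  rfl

theorem IsXG.eq_tower (hg : ∀ i, quotDown hH (Nat.le_succ i) (g (i + 1)) = g i)
    {y : InfPath (towerKG KG c hH)} (hy : IsXG KG c hH x g y) : y = x.tower c g hg :=
  InfPath.ext_of_map_zero (fun q => (hy.obj_eq_tower_and_map_heq hg q).1) fun q =>
    TObj.hom_heq (hy.obj_eq_tower_and_map_heq hg 0).1 (hy.obj_eq_tower_and_map_heq hg q).1
      ((hy.obj_eq_tower_and_map_heq hg q).2.trans (x.map_heq_of_eq rfl rfl _ _))

end IsXG

theorem stmt11_general {k : ℕ} {Λ : Type} [SmallCategory Λ] (KG : KGraph k Λ)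
    {G : Type} [Group G] (c : Cocycle Λ G)
    (H : ℕ → Subgroup G) [∀ i, (H i).Normal] (hH : Antitone H)
    (x : InfPath KG) (g : ∀ i, G ⧸ H i)
    (hg : ∀ i, quotDown hH (Nat.le_succ i) (g (i + 1)) = g i) :
    (∀ n : ℕ, ∃! w : InfPath (skewKGraph KG (cq c (H n))),
      (∀ m : Fin k → ℕ, w.P.obj m =
        ⟨x.P.obj m, (↑(c.c (x.P.map (homOfLE (zero_le : 0 ≤ m)))) : G ⧸ H n)⁻¹ * g n⟩) ∧
      ∀ m : Fin k → ℕ,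
        HEq (w.P.map (homOfLE (zero_le : 0 ≤ m))).1 (x.P.map (homOfLE (zero_le : 0 ≤ m)))) ∧
    (∃! y : InfPath (towerKG KG c hH), IsXG KG c hH x g y) ∧
    (∀ y : InfPath (towerKG KG c hH), IsXG KG c hH x g y →
      ∀ (n : ℕ) (m : Fin k → ℕ),
        (y.shift (Fin.snoc (0 : Fin k → ℕ) n)).P.obj (Fin.snoc m 0) =
          ⟨n, x.P.obj m, (↑(c.c (x.P.map (homOfLE (zero_le : 0 ≤ m)))) : G ⧸ H n)⁻¹ * g n⟩ ∧
        HEq ((y.shift (Fin.snoc (0 : Fin k → ℕ) n)).P.map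
              (homOfLE (zero_le : 0 ≤ (Fin.snoc m 0 : Fin (k + 1) → ℕ)))).1
            (x.P.map (homOfLE (zero_le : 0 ≤ m)))) := by
  refine ⟨fun n => ⟨x.skew c (H n) (g n), ⟨fun m => rfl, fun m => HEq.rfl⟩,
      fun w hw => x.eq_skew c (H n) (g n) hw.1 hw.2⟩,
    ⟨x.tower c g hg, isXG_tower hg, fun y hy => hy.eq_tower hg⟩, ?_⟩
  rintro y hy n m
  obtain rfl := hy.eq_tower hg
  exact ⟨x.tower_obj_eq c hg _ (by simp [transFunctor]) (by ext; simp [transFunctor, Fin.init]),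
    x.map_heq_of_eq (by ext; simp [transFunctor, Fin.init])
      (by ext; simp [transFunctor, Fin.init]) _ _⟩

/-- Standing setup: `Λ` a connected row-finite `k`-graph with no sources,
`c : Λ → G` a cocycle, `(Hₙ)` a descending chain of finite-index normal subgroups with
`H₀ = G`, and `T = tgrphlim (Λ ×_{cₙ} G/Hₙ; pₙ)` the tower `(k+1)`-graph.  Fix
`x ∈ Λ^∞` and `g = (gₙ) ∈ varprojlim (G/Hₙ, qₙ)`.  For each `n` there is a unique
infinite path `(x, gₙ) ∈ Λₙ^∞` with `(x, gₙ)(0, m) = (x(0, m), cₙ(x(0, m))⁻¹gₙ)`; there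
is a unique infinite path `x^g ∈ T^∞` with `x^g(0, (m, 0)) = ι₁(x(0, m))` and
`x^g(n·e_{k+1}) = (x(0), gₙ)`; and moreover
`σ^{n·e_{k+1}}(x^g)(0, (m, 0)) = ιₙ((x, gₙ)(0, m))` for all `m ∈ ℕᵏ` and all `n`. -/
theorem stmt11 {k : ℕ} {Λ : Type} [SmallCategory Λ] (KG : KGraph k Λ)
    [IsConnected Λ]
    (hrow : ∀ (v : Λ) (d : Fin k → ℕ), Finite ((b : Λ) × {f : v ⟶ b // KG.deg f = d}))
    (hns : ∀ (v : Λ) (d : Fin k → ℕ), ∃ (b : Λ) (f : v ⟶ b), KG.deg f = d)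
    {G : Type} [Group G] (c : Cocycle Λ G)
    (H : ℕ → Subgroup G) [∀ i, (H i).Normal] (hH : Antitone H)
    (hfin : ∀ i, (H i).FiniteIndex) (hH0 : H 0 = ⊤)
    (x : InfPath KG) (g : ∀ i, G ⧸ H i)
    (hg : ∀ i, quotDown hH (Nat.le_succ i) (g (i + 1)) = g i) :
    (∀ n : ℕ, ∃! w : InfPath (skewKGraph KG (cq c (H n))),
      (∀ m : Fin k → ℕ, w.P.obj m =
        ⟨x.P.obj m, (↑(c.c (x.P.map (homOfLE (zero_le : 0 ≤ m)))) : G ⧸ H n)⁻¹ * g n⟩) ∧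
      ∀ m : Fin k → ℕ,
        HEq (w.P.map (homOfLE (zero_le : 0 ≤ m))).1 (x.P.map (homOfLE (zero_le : 0 ≤ m)))) ∧
    (∃! y : InfPath (towerKG KG c hH), IsXG KG c hH x g y) ∧
    (∀ y : InfPath (towerKG KG c hH), IsXG KG c hH x g y →
      ∀ (n : ℕ) (m : Fin k → ℕ),
        (y.shift (Fin.snoc (0 : Fin k → ℕ) n)).P.obj (Fin.snoc m 0) =
          ⟨n, x.P.obj m, (↑(c.c (x.P.map (homOfLE (zero_le : 0 ≤ m)))) : G ⧸ H n)⁻¹ * g n⟩ ∧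
        HEq ((y.shift (Fin.snoc (0 : Fin k → ℕ) n)).P.map
              (homOfLE (zero_le : 0 ≤ (Fin.snoc m 0 : Fin (k + 1) → ℕ)))).1
            (x.P.map (homOfLE (zero_le : 0 ≤ m)))) :=
  stmt11_general KG c H hH x g hg
end

section
/- Let p_n : Λ_{n+1} → Λ_n (n ≥ 1) be a sequence of row-finite coverings of k-graphs with no sources, and equip varprojlim(Λ_i, p_i) with the topology generated by the cylinder sets. Then the coordinatewise composition map, defined on the set of composable pairs {(μ, ν) : s̃(μ) = r̃(ν)} ⊆ varprojlim(Λ_i, p_i) × varprojlim(Λ_i, p_i), is continuous. Indeed, for a cylinder set Z(λ_1, …, λ_j) with d(λ_1) = n, its inverse image under the composition map is the disjoint union, over p ∈ ℕ^k with p ≤ n, of the sets of composable pairs (μ, ν) with μ ∈ Z(λ_1(0,p), …, λ_j(0,p)) and ν ∈ Z(λ_1(p,n), …, λ_j(p,n)). -/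
open CategoryTheory

attribute [local instance 2000] Preorder.smallCategory

/-- A covering of `k`-graphs: a degree-preserving functor `p : Γ → Λ` which is surjective
on paths and restricts to bijections `vΓ → p(v)Λ` and `Γv → Λp(v)` for every vertex `v`. -/
structure IsCovering {k : ℕ} {Γ Λ : Type} [SmallCategory Γ] [SmallCategory Λ]
    (KGΓ : KGraph k Γ) (KGΛ : KGraph k Λ) (p : Γ ⥤ Λ) : Prop where
  deg_map : ∀ {a b : Γ} (f : a ⟶ b), KGΛ.deg (p.map f) = KGΓ.deg f
  surj : Function.Surjective
    (fun t : Σ (a b : Γ), a ⟶ b => (⟨p.obj t.1, p.obj t.2.1, p.map t.2.2⟩ : Σ (a b : Λ), a ⟶ b))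
  bij_out : ∀ v : Γ, Function.Bijective
    (fun t : Σ b : Γ, (v ⟶ b) => (⟨p.obj t.1, p.map t.2⟩ : Σ b' : Λ, (p.obj v ⟶ b')))
  bij_in : ∀ v : Γ, Function.Bijective
    (fun t : Σ a : Γ, (a ⟶ v) => (⟨p.obj t.1, p.map t.2⟩ : Σ a' : Λ, (a' ⟶ p.obj v)))

/-- The set of paths of `Λₙ`, as a type (with the discrete topology). -/
def Mor (Λ : ℕ → Type) [∀ n, SmallCategory (Λ n)] (n : ℕ) : Type :=
  Σ (a : Λ n) (b : Λ n), a ⟶ b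

instance (Λ : ℕ → Type) [∀ n, SmallCategory (Λ n)] (n : ℕ) :
    TopologicalSpace (Mor Λ n) := ⊥

instance (Λ : ℕ → Type) [∀ n, SmallCategory (Λ n)] (n : ℕ) :
    DiscreteTopology (Mor Λ n) := ⟨rfl⟩

/-- The map on paths induced by the covering `pₙ`. -/
def mapMor (Λ : ℕ → Type) [∀ n, SmallCategory (Λ n)] (p : ∀ n, Λ (n + 1) ⥤ Λ n)
    (n : ℕ) : Mor Λ (n + 1) → Mor Λ n :=
  fun t => ⟨(p n).obj t.1, (p n).obj t.2.1, (p n).map t.2.2⟩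

/-- The projective limit `varprojlim (Λᵢ, pᵢ)` of the path sets, topologised as a subspace
of the product `∏ᵢ Λᵢ` of the discrete path spaces. -/
def PLimSp (Λ : ℕ → Type) [∀ n, SmallCategory (Λ n)] (p : ∀ n, Λ (n + 1) ⥤ Λ n) : Type :=
  {σ : ∀ n, Mor Λ n // ∀ n, mapMor Λ p n (σ (n + 1)) = σ n}

instance (Λ : ℕ → Type) [∀ n, SmallCategory (Λ n)] (p : ∀ n, Λ (n + 1) ⥤ Λ n) :
    TopologicalSpace (PLimSp Λ p) :=
  inferInstanceAs (TopologicalSpace {σ : ∀ n, Mor Λ n // ∀ n, mapMor Λ p n (σ (n + 1)) = σ n})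

/-- The cylinder set `Z(τ₀, …, τⱼ)`. -/
def Cyl (Λ : ℕ → Type) [∀ n, SmallCategory (Λ n)] (p : ∀ n, Λ (n + 1) ⥤ Λ n)
    (j : ℕ) (τ : ∀ i, Mor Λ i) : Set (PLimSp Λ p) :=
  {σ | ∀ i ≤ j, σ.1 i = τ i}

/-- The family of cylinder sets (indexed by compatible finite prefixes of paths). -/
def CylFam (Λ : ℕ → Type) [∀ n, SmallCategory (Λ n)] (p : ∀ n, Λ (n + 1) ⥤ Λ n) :
    Set (Set (PLimSp Λ p)) :=
  {S | ∃ (j : ℕ) (τ : ∀ i, Mor Λ i),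
    (∀ i < j, mapMor Λ p i (τ (i + 1)) = τ i) ∧ S = Cyl Λ p j τ}

/-- The degree map `d̃` on `varprojlim (Λᵢ, pᵢ)`. -/
def dtSp {k : ℕ} (Λ : ℕ → Type) [∀ n, SmallCategory (Λ n)]
    (p : ∀ n, Λ (n + 1) ⥤ Λ n) (KGs : ∀ n, KGraph k (Λ n)) (σ : PLimSp Λ p) :
    Fin k → ℕ :=
  (KGs 0).deg (σ.1 0).2.2

/-- Composition of composable paths, as elements of the path set `Mor Λ n`. -/
def morComp (Λ : ℕ → Type) [∀ n, SmallCategory (Λ n)] {n : ℕ}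
    (f g : Mor Λ n) (h : f.2.1 = g.1) : Mor Λ n :=
  ⟨f.1, g.2.1, f.2.2 ≫ eqToHom h ≫ g.2.2⟩

lemma morComp_congr (Λ : ℕ → Type) [∀ n, SmallCategory (Λ n)] {n : ℕ}
    {f f' g g' : Mor Λ n} (hf : f = f') (hg : g = g') (h : f.2.1 = g.1) :
    morComp Λ f g h = morComp Λ f' g' (by rw [← hf, ← hg]; exact h) := by
  subst hf; subst hg; rfl

lemma mapMor_morComp (Λ : ℕ → Type) [∀ n, SmallCategory (Λ n)]
    (p : ∀ n, Λ (n + 1) ⥤ Λ n) (n : ℕ) (f g : Mor Λ (n + 1)) (h : f.2.1 = g.1) :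
    mapMor Λ p n (morComp Λ f g h) =
      morComp Λ (mapMor Λ p n f) (mapMor Λ p n g) (congrArg (p n).obj h) := by
  unfold mapMor morComp
  simp [eqToHom_map]
  rfl

/-- The set of composable pairs `{(μ, ν) : s̃(μ) = r̃(ν)}` in
`varprojlim (Λᵢ, pᵢ) × varprojlim (Λᵢ, pᵢ)`. -/
def CompPairs (Λ : ℕ → Type) [∀ n, SmallCategory (Λ n)] (p : ∀ n, Λ (n + 1) ⥤ Λ n) :
    Set (PLimSp Λ p × PLimSp Λ p) :=
  {x | ∀ n, (x.1.1 n).2.1 = (x.2.1 n).1}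

/-- The coordinatewise composition map on composable pairs. -/
def compMap (Λ : ℕ → Type) [∀ n, SmallCategory (Λ n)] (p : ∀ n, Λ (n + 1) ⥤ Λ n)
    (x : ↥(CompPairs Λ p)) : PLimSp Λ p :=
  ⟨fun n => morComp Λ (x.1.1.1 n) (x.1.2.1 n) (x.2 n), by
    intro n
    have hμ := x.1.1.2 n
    have hν := x.1.2.2 n
    rw [mapMor_morComp]
    exact morComp_congr Λ hμ hν _⟩

/-! Fix a cylinder `Z(τ₀, …, τⱼ)` with `d(τ₀) = n`. The coverings preserve degrees, so every
`τᵢ` has degree `n` and, for `μ` in the limit, `d(μᵢ) = d̃(μ)` for all `i`. By unique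
factorisation, `μᵢνᵢ = τᵢ` holds exactly when `(μᵢ, νᵢ) = (τᵢ(0, q), τᵢ(q, n))` with
`q = d̃(μ) ≤ n`; so the preimage is the union over `q ≤ n` of products of cylinders, pairwise
disjoint because `q = d̃(μ)`. Continuity is immediate: the `i`-th coordinate of `μν` depends
only on `μᵢ` and `νᵢ`, which range over discrete spaces. -/

lemma continuous_compMap (Λ : ℕ → Type) [∀ n, SmallCategory (Λ n)]
    (p : ∀ n, Λ (n + 1) ⥤ Λ n) : Continuous (compMap Λ p) := by
  refine Continuous.subtype_mk (continuous_pi fun i => ?_) _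
  let pair (x : ↥(CompPairs Λ p)) : {fg : Mor Λ i × Mor Λ i // fg.1.2.1 = fg.2.1} :=
    ⟨(x.1.1.1 i, x.1.2.1 i), x.2 i⟩
  have hcoord : Continuous fun σ : PLimSp Λ p => σ.1 i :=
    (continuous_apply i).comp continuous_subtype_val
  have hpair : Continuous pair := Continuous.subtype_mk
    ((hcoord.comp (continuous_fst.comp continuous_subtype_val)).prodMk
      (hcoord.comp (continuous_snd.comp continuous_subtype_val))) _
  exact (continuous_of_discreteTopology
    (f := fun fg : {fg : Mor Λ i × Mor Λ i // fg.1.2.1 = fg.2.1} =>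
      morComp Λ fg.1.1 fg.1.2 fg.2)).comp hpair

namespace KGraph

variable {k : ℕ} {Λ : Type} [SmallCategory Λ] (KG : KGraph k Λ)

/-- The factorisation `f = f(0, q) f(q, d f)`; a junk factorisation unless `q ≤ d f`. -/
noncomputable def split {a b : Λ} (f : a ⟶ b) (q : Fin k → ℕ) : Σ c : Λ, (a ⟶ c) × (c ⟶ b) :=
  @Classical.epsilon _ ⟨⟨a, 𝟙 a, f⟩⟩
    fun t => KG.deg t.2.1 = q ∧ KG.deg t.2.2 = KG.deg f - q ∧ t.2.1 ≫ t.2.2 = f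

lemma split_spec {a b : Λ} (f : a ⟶ b) {q : Fin k → ℕ} (hq : q ≤ KG.deg f) :
    KG.deg (KG.split f q).2.1 = q ∧ KG.deg (KG.split f q).2.2 = KG.deg f - q ∧
      (KG.split f q).2.1 ≫ (KG.split f q).2.2 = f :=
  Classical.epsilon_spec (KG.factor f q _ (add_tsub_cancel_of_le hq).symm).exists

lemma split_comp {a b c : Λ} (g : a ⟶ b) (h : b ⟶ c) :
    KG.split (g ≫ h) (KG.deg g) = ⟨b, g, h⟩ := by
  have hdeg : KG.deg h = KG.deg (g ≫ h) - KG.deg g := by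
    rw [KG.deg_comp, add_tsub_cancel_left]
  exact (KG.factor (g ≫ h) _ _ (hdeg ▸ KG.deg_comp g h)).unique
    (KG.split_spec (g ≫ h) (KG.deg_comp g h ▸ le_self_add)) ⟨rfl, hdeg, rfl⟩

end KGraph

section Segments

variable {k : ℕ} {Λ : ℕ → Type} [∀ n, SmallCategory (Λ n)] {n : ℕ} (KG : KGraph k (Λ n))

noncomputable def headSeg (f : Mor Λ n) (q : Fin k → ℕ) : Mor Λ n :=
  ⟨f.1, (KG.split f.2.2 q).1, (KG.split f.2.2 q).2.1⟩

noncomputable def tailSeg (f : Mor Λ n) (q : Fin k → ℕ) : Mor Λ n :=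
  ⟨(KG.split f.2.2 q).1, f.2.1, (KG.split f.2.2 q).2.2⟩

variable {KG}

lemma deg_headSeg {f : Mor Λ n} {q : Fin k → ℕ} (hq : q ≤ KG.deg f.2.2) :
    KG.deg (headSeg KG f q).2.2 = q :=
  (KG.split_spec f.2.2 hq).1

lemma deg_tailSeg {f : Mor Λ n} {q : Fin k → ℕ} (hq : q ≤ KG.deg f.2.2) :
    KG.deg (tailSeg KG f q).2.2 = KG.deg f.2.2 - q :=
  (KG.split_spec f.2.2 hq).2.1

lemma morComp_headSeg_tailSeg {f : Mor Λ n} {q : Fin k → ℕ} (hq : q ≤ KG.deg f.2.2) :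
    morComp Λ (headSeg KG f q) (tailSeg KG f q) rfl = f := by
  obtain ⟨a, b, f⟩ := f
  show (⟨a, b, (KG.split f q).2.1 ≫ 𝟙 _ ≫ (KG.split f q).2.2⟩ : Mor Λ n) = ⟨a, b, f⟩
  rw [Category.id_comp, (KG.split_spec f hq).2.2]

lemma deg_morComp (f g : Mor Λ n) (h : f.2.1 = g.1) :
    KG.deg (morComp Λ f g h).2.2 = KG.deg f.2.2 + KG.deg g.2.2 := by
  obtain ⟨a, b, f⟩ := f
  obtain ⟨b', c, g⟩ := g
  dsimp only at h
  subst h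
  simp only [morComp, eqToHom_refl, Category.id_comp, KG.deg_comp]

lemma headSeg_morComp (f g : Mor Λ n) (h : f.2.1 = g.1) :
    headSeg KG (morComp Λ f g h) (KG.deg f.2.2) = f := by
  rw [headSeg, morComp, KG.split_comp]
  rfl

lemma tailSeg_morComp (f g : Mor Λ n) (h : f.2.1 = g.1) :
    tailSeg KG (morComp Λ f g h) (KG.deg f.2.2) = g := by
  rw [tailSeg, morComp, KG.split_comp]
  obtain ⟨b, c, g⟩ := g
  dsimp only at h
  subst h
  rw [eqToHom_refl, Category.id_comp]

lemma headSeg_inj {f : Mor Λ n} {q q' : Fin k → ℕ} (hq : q ≤ KG.deg f.2.2)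
    (hq' : q' ≤ KG.deg f.2.2) (h : headSeg KG f q = headSeg KG f q') : q = q' := by
  rw [← deg_headSeg hq, h, deg_headSeg hq']

end Segments

section Limit

variable {k : ℕ} {Λ : ℕ → Type} [∀ n, SmallCategory (Λ n)] {p : ∀ n, Λ (n + 1) ⥤ Λ n}
  {KGs : ∀ n, KGraph k (Λ n)}

lemma deg_eq_of_compatible
    (hp : ∀ n {a b : Λ (n + 1)} (f : a ⟶ b), (KGs n).deg ((p n).map f) = (KGs (n + 1)).deg f)
    {j : ℕ} {τ : ∀ i, Mor Λ i} (hτ : ∀ i < j, mapMor Λ p i (τ (i + 1)) = τ i) :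
    ∀ i ≤ j, (KGs i).deg (τ i).2.2 = (KGs 0).deg (τ 0).2.2
  | 0, _ => rfl
  | i + 1, hi => by
    rw [← deg_eq_of_compatible hp hτ i (by omega), ← hτ i hi]
    exact (hp i _).symm

lemma deg_eq_dtSp
    (hp : ∀ n {a b : Λ (n + 1)} (f : a ⟶ b), (KGs n).deg ((p n).map f) = (KGs (n + 1)).deg f)
    (σ : PLimSp Λ p) (i : ℕ) : (KGs i).deg (σ.1 i).2.2 = dtSp Λ p KGs σ :=
  deg_eq_of_compatible hp (fun i _ => σ.2 i) i le_rfl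

lemma compMap_mem_cyl_iff
    (hp : ∀ n {a b : Λ (n + 1)} (f : a ⟶ b), (KGs n).deg ((p n).map f) = (KGs (n + 1)).deg f)
    {j : ℕ} {τ : ∀ i, Mor Λ i} (hτ : ∀ i < j, mapMor Λ p i (τ (i + 1)) = τ i)
    {n : Fin k → ℕ} (hn : (KGs 0).deg (τ 0).2.2 = n) (x : ↥(CompPairs Λ p)) :
    compMap Λ p x ∈ Cyl Λ p j τ ↔ ∃ q ≤ n,
      (∀ i ≤ j, x.1.1.1 i = headSeg (KGs i) (τ i) q) ∧
        ∀ i ≤ j, x.1.2.1 i = tailSeg (KGs i) (τ i) q := by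
  constructor
  · intro hx
    have hq : dtSp Λ p KGs x.1.1 ≤ n := by
      rw [← hn, ← hx 0 j.zero_le]
      exact le_of_le_of_eq le_self_add (deg_morComp (x.1.1.1 0) (x.1.2.1 0) (x.2 0)).symm
    refine ⟨dtSp Λ p KGs x.1.1, hq, fun i hi => ?_, fun i hi => ?_⟩
    · rw [← hx i hi, ← deg_eq_dtSp hp x.1.1 i]
      exact (headSeg_morComp _ _ _).symm
    · rw [← hx i hi, ← deg_eq_dtSp hp x.1.1 i]
      exact (tailSeg_morComp _ _ _).symm
  · rintro ⟨q, hq, hμ, hν⟩ i hi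
    have hqi : q ≤ (KGs i).deg (τ i).2.2 := by rwa [deg_eq_of_compatible hp hτ i hi, hn]
    exact (morComp_congr Λ (hμ i hi) (hν i hi) (x.2 i)).trans (morComp_headSeg_tailSeg hqi)

end Limit

theorem stmt18_general {k : ℕ} (Λ : ℕ → Type) [∀ n, SmallCategory (Λ n)]
    (p : ∀ n, Λ (n + 1) ⥤ Λ n) (KGs : ∀ n, KGraph k (Λ n))
    (hcov : ∀ n, IsCovering (KGs (n + 1)) (KGs n) (p n)) :
    Continuous (compMap Λ p) ∧
    ∀ (j : ℕ) (τ : ∀ i, Mor Λ i), (∀ i < j, mapMor Λ p i (τ (i + 1)) = τ i) →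
      ∀ n : Fin k → ℕ, (KGs 0).deg (τ 0).2.2 = n →
      ∃ μF νF : (Fin k → ℕ) → ∀ i, Mor Λ i,
        (∀ q : Fin k → ℕ, q ≤ n → ∀ i, i ≤ j →
          (KGs i).deg ((μF q i).2.2) = q ∧
          (KGs i).deg ((νF q i).2.2) = n - q ∧
          ∃ h : (μF q i).2.1 = (νF q i).1, morComp Λ (μF q i) (νF q i) h = τ i) ∧
        (compMap Λ p ⁻¹' Cyl Λ p j τ =
          ⋃ (q : Fin k → ℕ) (_ : q ≤ n),
            {x : ↥(CompPairs Λ p) |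
              (∀ i ≤ j, x.1.1.1 i = μF q i) ∧ ∀ i ≤ j, x.1.2.1 i = νF q i}) ∧
        ∀ q q' : Fin k → ℕ, q ≤ n → q' ≤ n → q ≠ q' →
          Disjoint
            {x : ↥(CompPairs Λ p) |
              (∀ i ≤ j, x.1.1.1 i = μF q i) ∧ ∀ i ≤ j, x.1.2.1 i = νF q i}
            {x : ↥(CompPairs Λ p) |
              (∀ i ≤ j, x.1.1.1 i = μF q' i) ∧ ∀ i ≤ j, x.1.2.1 i = νF q' i} := by
  have hp : ∀ n {a b : Λ (n + 1)} (f : a ⟶ b), (KGs n).deg ((p n).map f) = (KGs (n + 1)).deg f :=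
    fun n _ _ f => (hcov n).deg_map f
  refine ⟨continuous_compMap Λ p, fun j τ hτ n hn => ?_⟩
  have hτn : ∀ i ≤ j, (KGs i).deg (τ i).2.2 = n :=
    fun i hi => (deg_eq_of_compatible hp hτ i hi).trans hn
  refine ⟨fun q i => headSeg (KGs i) (τ i) q, fun q i => tailSeg (KGs i) (τ i) q, ?_, ?_, ?_⟩
  · intro q hq i hi
    rw [← hτn i hi] at hq ⊢
    exact ⟨deg_headSeg hq, deg_tailSeg hq, rfl, morComp_headSeg_tailSeg hq⟩
  · ext x
    simpa only [Set.mem_preimage, Set.mem_iUnion, exists_prop, Set.mem_ofPred_eq] using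
      compMap_mem_cyl_iff hp hτ hn x
  · intro q q' hq hq' hne
    rw [← hτn 0 j.zero_le] at hq hq'
    exact Set.disjoint_left.mpr fun x hx hx' =>
      hne (headSeg_inj hq hq' ((hx.1 0 j.zero_le).symm.trans (hx'.1 0 j.zero_le)))

/-- For a sequence of row-finite coverings of `k`-graphs with no sources,
the coordinatewise composition map, defined on the set of composable pairs in
`varprojlim (Λᵢ, pᵢ) × varprojlim (Λᵢ, pᵢ)`, is continuous; and the preimage of a cylinder
set `Z(τ₀, …, τⱼ)` with `d(τ₀) = n` is the disjoint union, over `q ≤ n`, of the sets of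
composable pairs of cylinders determined by the (coordinatewise, unique) factorisations
`τᵢ = τᵢ(0, q)·τᵢ(q, n)`. -/
theorem stmt18 {k : ℕ} (Λ : ℕ → Type) [∀ n, SmallCategory (Λ n)]
    (p : ∀ n, Λ (n + 1) ⥤ Λ n) (KGs : ∀ n, KGraph k (Λ n))
    (hcov : ∀ n, IsCovering (KGs (n + 1)) (KGs n) (p n))
    (hfib : ∀ (n : ℕ) (v : Λ n), Finite {w : Λ (n + 1) // (p n).obj w = v})
    (hrow : ∀ (n : ℕ) (v : Λ n) (d : Fin k → ℕ),
      Finite ((b : Λ n) × {f : v ⟶ b // (KGs n).deg f = d}))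
    (hns : ∀ (n : ℕ) (v : Λ n) (d : Fin k → ℕ),
      ∃ (b : Λ n) (f : v ⟶ b), (KGs n).deg f = d) :
    Continuous (compMap Λ p) ∧
    ∀ (j : ℕ) (τ : ∀ i, Mor Λ i), (∀ i < j, mapMor Λ p i (τ (i + 1)) = τ i) →
      ∀ n : Fin k → ℕ, (KGs 0).deg (τ 0).2.2 = n →
      ∃ μF νF : (Fin k → ℕ) → ∀ i, Mor Λ i,
        (∀ q : Fin k → ℕ, q ≤ n → ∀ i, i ≤ j →
          (KGs i).deg ((μF q i).2.2) = q ∧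
          (KGs i).deg ((νF q i).2.2) = n - q ∧
          ∃ h : (μF q i).2.1 = (νF q i).1, morComp Λ (μF q i) (νF q i) h = τ i) ∧
        (compMap Λ p ⁻¹' Cyl Λ p j τ =
          ⋃ (q : Fin k → ℕ) (_ : q ≤ n),
            {x : ↥(CompPairs Λ p) |
              (∀ i ≤ j, x.1.1.1 i = μF q i) ∧ ∀ i ≤ j, x.1.2.1 i = νF q i}) ∧
        ∀ q q' : Fin k → ℕ, q ≤ n → q' ≤ n → q ≠ q' →
          Disjoint
            {x : ↥(CompPairs Λ p) |
              (∀ i ≤ j, x.1.1.1 i = μF q i) ∧ ∀ i ≤ j, x.1.2.1 i = νF q i}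
            {x : ↥(CompPairs Λ p) |
              (∀ i ≤ j, x.1.1.1 i = μF q' i) ∧ ∀ i ≤ j, x.1.2.1 i = νF q' i} :=
  stmt18_general Λ p KGs hcov
end
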